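/- Let H be a connected k-uniform hypergraph with n vertices, at least one edge, maximum degree Δ, minimum degree δ, and signless Laplacian eigenpair (ρ, x). Then x_max − x_min ≥ (√Δ − √δ)/√(nΔ), and equality holds if and only if H is regular. -/

import Mathlib

/-!
Write `Q` for the signless Laplacian, so that `(Q x)_v = ∑_{e ∋ v} ∑_{w ∈ e} x_w`. Bounding every
inner sum by `k x_min` at a vertex of degree `Δ` and by `k x_max` at a vertex of degree `δ` gives
`Δ x_min² ≤ δ x_max²`, that is `√Δ x_min ≤ √δ x_max`, while the normalisation gives `√n x_max ≥ 1`.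
Hence `x_max - x_min ≥ x_max (√Δ - √δ) / √Δ ≥ (√Δ - √δ) / √(nΔ)`.

Equality with `δ < Δ` would force `√n x_max = 1`, hence `x` constant and `x_max - x_min = 0`.
Conversely, in an `r`-regular hypergraph the two bounds pin down `ρ = r k`; then every edge through
a vertex where `x` is maximal consists of such vertices, and connectivity spreads the maximum to
all of `V`.
-/

open Finset Matrix

variable {V : Type*} [Fintype V] [DecidableEq V]

/-- The incidence matrix of a hypergraph with vertex type `V` and edge set `E`:
`B(v,e) = 1` if `v ∈ e` and `0` otherwise. -/
def inc (E : Finset (Finset V)) : Matrix V ↥E ℝ :=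
  fun v e => if v ∈ (e : Finset V) then 1 else 0

/-- The signless Laplacian matrix `Q = B * Bᵀ`. -/
def signlessLap (E : Finset (Finset V)) : Matrix V V ℝ :=
  inc E * (inc E)ᵀ

/-- The degree of a vertex: the number of edges containing it. -/
def deg (E : Finset (Finset V)) (v : V) : ℕ :=
  (E.filter fun e => v ∈ e).card

/-- A hypergraph is connected if the reflexive-transitive closure of the relation
"`u ≠ v` and some edge contains both `u` and `v`" relates every pair of vertices. -/
def HConnected (E : Finset (Finset V)) : Prop :=
  ∀ u v : V, Relation.ReflTransGen (fun a b => a ≠ b ∧ ∃ e ∈ E, a ∈ e ∧ b ∈ e) u v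

/-- A hypergraph is regular if all vertices have the same degree. -/
def HRegular (E : Finset (Finset V)) : Prop :=
  ∃ r, ∀ v : V, deg E v = r

/-- A signless Laplacian eigenpair `(ρ, x)`: `x` is entrywise positive,
normalized by `∑ v, x v ^ 2 = 1`, and `Q x = ρ x`. -/
def Eigenpair (E : Finset (Finset V)) (ρ : ℝ) (x : V → ℝ) : Prop :=
  (∀ v, 0 < x v) ∧ (∑ v, x v ^ 2 = 1) ∧ (signlessLap E).mulVec x = ρ • x


theorem sqrt_mul_le_sqrt_mul_of_mul_sq_le {a b m M : ℝ} (hm : 0 ≤ m) (hM : 0 ≤ M)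
    (h : a * m ^ 2 ≤ b * M ^ 2) : √a * m ≤ √b * M := by
  have := Real.sqrt_le_sqrt h
  rwa [Real.sqrt_mul' _ (by positivity), Real.sqrt_mul' _ (by positivity), Real.sqrt_sq hm,
    Real.sqrt_sq hM] at this

theorem sub_div_mul_le_sub {a b N m M : ℝ} (ha : 0 < a) (hba : b ≤ a) (hN : 0 < N)
    (hNM : 1 ≤ N * M) (h : a * m ≤ b * M) : (a - b) / (N * a) ≤ M - m := by
  rw [div_le_iff₀ (by positivity)]
  nlinarith [mul_nonneg (sub_nonneg.2 hba) (sub_nonneg.2 hNM), mul_le_mul_of_nonneg_left h hN.le]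

theorem eq_of_sub_eq_sub_div_mul {a b N m M : ℝ} (ha : 0 < a) (hba : b ≤ a) (hN : 0 < N)
    (hNM : 1 ≤ N * M) (h : a * m ≤ b * M) (hflat : N * M = 1 → m = M)
    (heq : M - m = (a - b) / (N * a)) : b = a := by
  rw [eq_div_iff (by positivity)] at heq
  by_contra hne
  have hab : 0 < a - b := sub_pos.2 (lt_of_le_of_ne hba hne)
  have hNM1 : N * M = 1 := by nlinarith [mul_le_mul_of_nonneg_left h hN.le]
  rw [hflat hNM1, sub_self, zero_mul] at heq
  exact hne (by linarith)

theorem one_le_sqrt_card_mul {ι : Type*} [Fintype ι] {x : ι → ℝ} (hx : ∀ i, 0 ≤ x i)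
    (hnorm : ∑ i, x i ^ 2 = 1) {M : ℝ} (hM : ∀ i, x i ≤ M) (hM0 : 0 ≤ M) :
    1 ≤ √(Fintype.card ι : ℝ) * M := by
  have hsq : 1 * 1 ^ 2 ≤ (Fintype.card ι : ℝ) * M ^ 2 :=
    calc 1 * 1 ^ 2 = ∑ i, x i ^ 2 := by rw [hnorm]; norm_num
      _ ≤ ∑ _i : ι, M ^ 2 := sum_le_sum fun i _ => pow_le_pow_left₀ (hx i) (hM i) 2
      _ = Fintype.card ι * M ^ 2 := by rw [sum_const, nsmul_eq_mul, card_univ]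
  have := sqrt_mul_le_sqrt_mul_of_mul_sq_le zero_le_one hM0 hsq
  rwa [Real.sqrt_one, mul_one] at this

theorem eq_of_sqrt_card_mul_eq_one {ι : Type*} [Fintype ι] {x : ι → ℝ} (hx : ∀ i, 0 ≤ x i)
    (hnorm : ∑ i, x i ^ 2 = 1) {M : ℝ} (hM : ∀ i, x i ≤ M) (h : √(Fintype.card ι : ℝ) * M = 1)
    (i : ι) : x i = M := by
  have hsum : ∑ j, x j ^ 2 = ∑ _j : ι, M ^ 2 := by
    rw [hnorm, sum_const, nsmul_eq_mul, card_univ,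
      ← Real.sq_sqrt (Nat.cast_nonneg (Fintype.card ι)), ← mul_pow, h, one_pow]
  have := (sum_eq_sum_iff_of_le fun j _ => pow_le_pow_left₀ (hx j) (hM j) 2).1 hsum i (mem_univ i)
  exact (pow_left_inj₀ (hx i) ((hx i).trans (hM i)) two_ne_zero).1 this

section Degree

variable {W : Type*} [DecidableEq W] {E : Finset (Finset W)} {k : ℕ}

theorem sum_filter_sum_const_eq_deg_mul (hunif : ∀ e ∈ E, e.card = k) (v : W) (c : ℝ) :
    ∑ e ∈ E with v ∈ e, ∑ _w ∈ e, c = deg E v * (k * c) := by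
  rw [deg, ← nsmul_eq_mul, ← sum_const]
  refine sum_congr rfl fun e he => ?_
  rw [sum_const, hunif e (mem_filter.1 he).1, nsmul_eq_mul]

theorem exists_deg_pos (hE : E.Nonempty) (hk : 0 < k) (hunif : ∀ e ∈ E, e.card = k) :
    ∃ v, 0 < deg E v := by
  obtain ⟨e, he⟩ := hE
  obtain ⟨v, hv⟩ := card_pos.1 ((hunif e he).symm ▸ hk)
  exact ⟨v, card_pos.2 ⟨e, mem_filter.2 ⟨he, hv⟩⟩⟩

theorem hRegular_iff {Δ δ : ℕ} (hΔ : IsGreatest (Set.range (deg E)) Δ)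
    (hδ : IsLeast (Set.range (deg E)) δ) : HRegular E ↔ δ = Δ := by
  obtain ⟨u, rfl⟩ := hΔ.1
  obtain ⟨w, rfl⟩ := hδ.1
  refine ⟨fun ⟨r, hr⟩ => (hr w).trans (hr u).symm, fun h => ⟨deg E u, fun v => ?_⟩⟩
  exact le_antisymm (hΔ.2 ⟨v, rfl⟩) (h ▸ hδ.2 ⟨v, rfl⟩)

end Degree

theorem HConnected.forall_of_mem_edge {W : Type*} {E : Finset (Finset W)} {P : W → Prop}
    (hconn : HConnected E) {a : W} (ha : P a)
    (hP : ∀ e ∈ E, ∀ u ∈ e, P u → ∀ w ∈ e, P w) (v : W) : P v := by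
  induction hconn a v with
  | refl => exact ha
  | tail _ hrel ih =>
    obtain ⟨-, e, he, hu, hw⟩ := hrel
    exact hP e he _ hu ih _ hw

section SignlessLaplacian

variable {E : Finset (Finset V)} {k : ℕ} {x : V → ℝ} {ρ : ℝ}

theorem signlessLap_mulVec_apply (E : Finset (Finset V)) (x : V → ℝ) (v : V) :
    (signlessLap E *ᵥ x) v = ∑ e ∈ E with v ∈ e, ∑ w ∈ e, x w := by
  rw [sum_filter, ← sum_coe_sort E fun e => if v ∈ e then ∑ w ∈ e, x w else 0]
  simp only [signlessLap, mulVec, mul_apply, transpose_apply, dotProduct, inc, sum_mul]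
  rw [sum_comm]
  refine sum_congr rfl fun e _ => ?_
  by_cases hv : v ∈ (e : Finset V) <;> simp [hv, sum_ite_mem]

theorem signlessLap_mulVec_apply_le (hunif : ∀ e ∈ E, e.card = k) {M : ℝ} (hM : ∀ w, x w ≤ M)
    (v : V) : (signlessLap E *ᵥ x) v ≤ deg E v * (k * M) := by
  rw [signlessLap_mulVec_apply, ← sum_filter_sum_const_eq_deg_mul hunif]
  gcongr with e _ w
  exact hM w

theorem le_signlessLap_mulVec_apply (hunif : ∀ e ∈ E, e.card = k) {m : ℝ} (hm : ∀ w, m ≤ x w)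
    (v : V) : deg E v * (k * m) ≤ (signlessLap E *ᵥ x) v := by
  rw [signlessLap_mulVec_apply, ← sum_filter_sum_const_eq_deg_mul hunif]
  gcongr with e _ w
  exact hm w

theorem eq_of_signlessLap_mulVec_apply_eq (hunif : ∀ e ∈ E, e.card = k) {M : ℝ}
    (hM : ∀ w, x w ≤ M) {v : V} (hv : (signlessLap E *ᵥ x) v = deg E v * (k * M))
    {e : Finset V} (he : e ∈ E) (hve : v ∈ e) {w : V} (hw : w ∈ e) : x w = M := by
  rw [signlessLap_mulVec_apply, ← sum_filter_sum_const_eq_deg_mul hunif,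
    sum_eq_sum_iff_of_le fun e _ => sum_le_sum fun w _ => hM w] at hv
  exact (sum_eq_sum_iff_of_le fun w _ => hM w).1 (hv e (mem_filter.2 ⟨he, hve⟩)) w hw

theorem sqrt_deg_mul_le_sqrt_deg_mul (hk : 0 < k) (hunif : ∀ e ∈ E, e.card = k)
    (hpos : ∀ v, 0 < x v) (hQ : signlessLap E *ᵥ x = ρ • x) {m M : ℝ} (hm : ∀ v, m ≤ x v)
    (hM : ∀ v, x v ≤ M) (hm0 : 0 ≤ m) (u w : V) : √(deg E u : ℝ) * m ≤ √(deg E w : ℝ) * M := by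
  have hQv : ∀ v, (signlessLap E *ᵥ x) v = ρ * x v := fun v => by simp [hQ]
  have hlow := hQv u ▸ le_signlessLap_mulVec_apply hunif hm u
  have hup := hQv w ▸ signlessLap_mulVec_apply_le hunif hM w
  have hρ : 0 ≤ ρ := by
    have := hQv u ▸ le_signlessLap_mulVec_apply hunif (fun v => (hpos v).le) u
    exact nonneg_of_mul_nonneg_left (by simpa using this) (hpos u)
  have hM0 : 0 ≤ M := (hm0.trans (hm w)).trans (hM w)
  have hlink : ρ * x u * m ≤ ρ * x w * M := by
    have := mul_le_mul (hM u) (hm w) hm0 hM0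
    nlinarith [mul_le_mul_of_nonneg_left this hρ]
  have hkR : (0 : ℝ) < k := by exact_mod_cast hk
  refine sqrt_mul_le_sqrt_mul_of_mul_sq_le hm0 hM0 (le_of_mul_le_mul_left ?_ hkR)
  nlinarith [mul_le_mul_of_nonneg_right hlow hm0, mul_le_mul_of_nonneg_right hup hM0]

theorem eigenvalue_eq_of_regular [Nonempty V] (hunif : ∀ e ∈ E, e.card = k)
    (hpos : ∀ v, 0 < x v) (hQ : signlessLap E *ᵥ x = ρ • x) {r : ℕ} (hr : ∀ v, deg E v = r) :
    ρ = r * k := by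
  have hQv : ∀ v, (signlessLap E *ᵥ x) v = ρ * x v := fun v => by simp [hQ]
  obtain ⟨a, ha⟩ := Finite.exists_max x
  obtain ⟨b, hb⟩ := Finite.exists_min x
  have hup := hQv a ▸ hr a ▸ signlessLap_mulVec_apply_le hunif ha a
  have hlow := hQv b ▸ hr b ▸ le_signlessLap_mulVec_apply hunif hb b
  apply le_antisymm
  · exact le_of_mul_le_mul_right (by linarith) (hpos a)
  · exact le_of_mul_le_mul_right (by linarith) (hpos b)

theorem eq_of_hRegular (hunif : ∀ e ∈ E, e.card = k) (hconn : HConnected E)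
    (hpos : ∀ v, 0 < x v) (hQ : signlessLap E *ᵥ x = ρ • x) (hreg : HRegular E) {M : ℝ}
    (hmax : IsGreatest (Set.range x) M) (v : V) : x v = M := by
  obtain ⟨r, hr⟩ := hreg
  obtain ⟨a, ha⟩ := hmax.1
  have : Nonempty V := ⟨a⟩
  have hρ := eigenvalue_eq_of_regular hunif hpos hQ hr
  have hM : ∀ w, x w ≤ M := fun w => hmax.2 ⟨w, rfl⟩
  refine hconn.forall_of_mem_edge (P := fun v => x v = M) ha (fun e he u hue hu w hw => ?_) v
  refine eq_of_signlessLap_mulVec_apply_eq hunif hM ?_ he hue hw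
  rw [hQ, Pi.smul_apply, smul_eq_mul, hu, hρ, hr u]
  ring

end SignlessLaplacian

/-- For a connected `k`-graph with `n` vertices, at least one edge, maximum degree `Δ`,
minimum degree `δ` and signless Laplacian eigenpair `(ρ, x)`:
`x_max − x_min ≥ (√Δ − √δ)/√(nΔ)`, with equality iff `H` is regular. -/
theorem xmax_sub_xmin_lower_bound {V : Type*} [Fintype V] [DecidableEq V] (k : ℕ)
    (hk : 2 ≤ k) (E : Finset (Finset V)) (hunif : ∀ e ∈ E, e.card = k)
    (hconn : HConnected E) (hE : E.Nonempty)
    (ρ : ℝ) (x : V → ℝ) (hx : Eigenpair E ρ x)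
    (Δ δ : ℕ) (hΔ : IsGreatest (Set.range (deg E)) Δ) (hδ : IsLeast (Set.range (deg E)) δ)
    (xmax xmin : ℝ) (hmax : IsGreatest (Set.range x) xmax)
    (hmin : IsLeast (Set.range x) xmin) :
    (Real.sqrt Δ - Real.sqrt δ) / Real.sqrt ((Fintype.card V : ℝ) * Δ) ≤ xmax - xmin ∧
      (xmax - xmin = (Real.sqrt Δ - Real.sqrt δ) / Real.sqrt ((Fintype.card V : ℝ) * Δ)
        ↔ HRegular E) := by
  obtain ⟨hpos, hnorm, hQ⟩ := hx
  have hk0 : 0 < k := by omega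
  have hxM : ∀ v, x v ≤ xmax := fun v => hmax.2 ⟨v, rfl⟩
  have hxm : ∀ v, xmin ≤ x v := fun v => hmin.2 ⟨v, rfl⟩
  have hxmin : 0 ≤ xmin := by obtain ⟨b, rfl⟩ := hmin.1; exact (hpos b).le
  have hxmax : 0 ≤ xmax := by obtain ⟨a, rfl⟩ := hmax.1; exact (hpos a).le
  have hΔpos : 0 < √(Δ : ℝ) := by
    obtain ⟨v, hv⟩ := exists_deg_pos hE hk0 hunif
    exact Real.sqrt_pos.2 (by exact_mod_cast hv.trans_le (hΔ.2 ⟨v, rfl⟩))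
  have hδΔ : √(δ : ℝ) ≤ √(Δ : ℝ) := Real.sqrt_le_sqrt (by exact_mod_cast hδ.2 hΔ.1)
  have hkey : √(Δ : ℝ) * xmin ≤ √(δ : ℝ) * xmax := by
    obtain ⟨u, rfl⟩ := hΔ.1
    obtain ⟨w, rfl⟩ := hδ.1
    exact sqrt_deg_mul_le_sqrt_deg_mul hk0 hunif hpos hQ hxm hxM hxmin u w
  have hnM := one_le_sqrt_card_mul (fun v => (hpos v).le) hnorm hxM hxmax
  have hn : 0 < √(Fintype.card V : ℝ) :=
    (Real.sqrt_nonneg _).lt_of_ne fun h => by rw [← h, zero_mul] at hnM; linarith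
  have hflat : √(Fintype.card V : ℝ) * xmax = 1 → xmin = xmax := fun h => by
    obtain ⟨b, rfl⟩ := hmin.1
    exact eq_of_sqrt_card_mul_eq_one (fun v => (hpos v).le) hnorm hxM h b
  rw [Real.sqrt_mul (Nat.cast_nonneg _)]
  refine ⟨sub_div_mul_le_sub hΔpos hδΔ hn hnM hkey, fun heq => ?_, fun hreg => ?_⟩
  · refine (hRegular_iff hΔ hδ).2 ?_
    exact_mod_cast (Real.sqrt_inj (Nat.cast_nonneg _) (Nat.cast_nonneg _)).1
      (eq_of_sub_eq_sub_div_mul hΔpos hδΔ hn hnM hkey hflat heq)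
  · obtain ⟨b, rfl⟩ := hmin.1
    rw [eq_of_hRegular hunif hconn hpos hQ hreg hmax b, (hRegular_iff hΔ hδ).1 hreg]
    simp
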